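/- Let C be a category of noncrossing colored partitions, let β_k = θ_k*θ_k (two horizontal blocks of k white points each, with β_{-k} the all-black version and β_0 the empty partition), and set J(C) = {k ∈ ℤ : β_k ∈ C}. If I(C) = ℤ \ {0} (π_k ∈ C for all k ≠ 0), then J(C) is an additive subgroup of ℤ, hence J(C) = nℤ for some n ≥ 0. -/

import Mathlib

open scoped Classical

/-- A two-colored partition with `k` upper and `l` lower points; `true` = white. -/
structure CPartition where
  k : ℕ
  l : ℕ
  uc : Fin k → Bool
  lc : Fin l → Bool
  rel : Setoid (Fin k ⊕ Fin l)

namespace CPartition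

/-- The disjoint union of two setoids. -/
def sumSetoid {X Y : Type*} (p : Setoid X) (q : Setoid Y) : Setoid (X ⊕ Y) where
  r := Sum.LiftRel p.r q.r
  iseqv := by
    refine ⟨fun x => ?_, fun h => ?_, fun h h' => ?_⟩
    · cases x with
      | inl a => exact Sum.LiftRel.inl (p.iseqv.refl a)
      | inr b => exact Sum.LiftRel.inr (q.iseqv.refl b)
    · cases h with
      | inl h => exact Sum.LiftRel.inl (p.iseqv.symm h)
      | inr h => exact Sum.LiftRel.inr (q.iseqv.symm h)
    · cases h with
      | inl h =>
        cases h' with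
        | inl h' => exact Sum.LiftRel.inl (p.iseqv.trans h h')
      | inr h =>
        cases h' with
        | inr h' => exact Sum.LiftRel.inr (q.iseqv.trans h h')

/-- Horizontal concatenation `p ⊗ q`. -/
def tensor (p q : CPartition) : CPartition where
  k := p.k + q.k
  l := p.l + q.l
  uc := fun i => Sum.elim p.uc q.uc (finSumFinEquiv.symm i)
  lc := fun j => Sum.elim p.lc q.lc (finSumFinEquiv.symm j)
  rel := Setoid.comap
    (fun x => Equiv.sumSumSumComm (Fin p.k) (Fin q.k) (Fin p.l) (Fin q.l)
      (Sum.map (fun i => finSumFinEquiv.symm i) (fun j => finSumFinEquiv.symm j) x))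
    (sumSetoid p.rel q.rel)

/-- Reflection `p*` (exchange the two rows, keeping colors). -/
def reflect (p : CPartition) : CPartition where
  k := p.l
  l := p.k
  uc := p.lc
  lc := p.uc
  rel := Setoid.comap Sum.swap p.rel

/-- The conjugate partition `p̄` : rotate all upper points to the lower row and
conversely (order is reversed and colors are switched). -/
def conj (p : CPartition) : CPartition where
  k := p.l
  l := p.k
  uc := fun i => !(p.lc i.rev)
  lc := fun j => !(p.uc j.rev)
  rel := Setoid.comap
    (Sum.elim (fun i => Sum.inr i.rev) (fun j => Sum.inl j.rev)) p.rel

/-- Vertical concatenation: `p` on top, then `q` below (requires `p.l = q.k`).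
Points of the middle row are identified and removed, blocks being joined along them. -/
def vcomp (p q : CPartition) (h : p.l = q.k) : CPartition where
  k := p.k
  l := q.l
  uc := p.uc
  lc := q.lc
  rel := Setoid.comap (Sum.map id Sum.inr)
    (Relation.EqvGen.setoid (fun x y : Fin p.k ⊕ (Fin p.l ⊕ Fin q.l) =>
      (∃ a b, p.rel.r a b ∧ Sum.map id Sum.inl a = x ∧ Sum.map id Sum.inl b = y) ∨
      (∃ a b, q.rel.r a b ∧
        Sum.inr (Sum.map (Fin.cast h.symm) id a) = x ∧
        Sum.inr (Sum.map (Fin.cast h.symm) id b) = y)))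

/-- Rotation: move the leftmost upper point to the leftmost lower position,
switching its color. -/
def rotDown (p : CPartition) (m : ℕ) (h : p.k = m + 1) : CPartition where
  k := m
  l := p.l + 1
  uc := fun i => p.uc (Fin.cast h.symm i.succ)
  lc := fun j => Fin.cases (!(p.uc (Fin.cast h.symm 0))) p.lc j
  rel := Setoid.comap
    (Sum.elim (fun i => Sum.inl (Fin.cast h.symm i.succ))
      (fun j => Fin.cases (Sum.inl (Fin.cast h.symm (0 : Fin (m + 1))))
        (fun j' => Sum.inr j') j)) p.rel

/-- Rotation: move the leftmost lower point to the leftmost upper position,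
switching its color. -/
def rotUp (p : CPartition) (m : ℕ) (h : p.l = m + 1) : CPartition where
  k := p.k + 1
  l := m
  uc := fun i => Fin.cases (!(p.lc (Fin.cast h.symm 0))) p.uc i
  lc := fun j => p.lc (Fin.cast h.symm j.succ)
  rel := Setoid.comap
    (Sum.elim (fun i => Fin.cases (Sum.inr (Fin.cast h.symm (0 : Fin (m + 1))))
        (fun i' => Sum.inl i') i)
      (fun j => Sum.inr (Fin.cast h.symm j.succ))) p.rel

/-- The identity partition with coloring `c`. -/
def idPart {n : ℕ} (c : Fin n → Bool) : CPartition where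
  k := n
  l := n
  uc := c
  lc := c
  rel := Setoid.ker (Sum.elim id id)

/-- A block (class) of `p` is a through-block when it contains both an upper
and a lower point. -/
def IsThrough (p : CPartition) (c : Quotient p.rel) : Prop :=
  (∃ i : Fin p.k, Quotient.mk p.rel (Sum.inl i) = c) ∧
    (∃ j : Fin p.l, Quotient.mk p.rel (Sum.inr j) = c)

/-- The number `t(p)` of through-blocks of `p`. -/
noncomputable def t (p : CPartition) : ℕ := Nat.card {c : Quotient p.rel // p.IsThrough c}

/-- A projective partition: `pp = p = p*`. -/
def IsProjective (p : CPartition) : Prop :=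
  ∃ h : p.l = p.k, vcomp p p h = p ∧ reflect p = p

/-- Equivalence of projective partitions in `C` : `p ∼ q` iff `r*r = p`, `rr* = q`
for some `r ∈ C`. -/
def EquivIn (C : Set CPartition) (p q : CPartition) : Prop :=
  ∃ r ∈ C, vcomp r (reflect r) rfl = p ∧ vcomp (reflect r) r rfl = q

/-- Position of a point in the counterclockwise planar order. -/
def ptIdx (p : CPartition) : Fin p.k ⊕ Fin p.l → ℕ :=
  Sum.elim (fun i => (i : ℕ)) (fun j => p.k + (p.l - 1 - (j : ℕ)))

/-- A partition is noncrossing when its strings can be drawn without crossings. -/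
def NonCrossing (p : CPartition) : Prop :=
  ∀ a b c d : Fin p.k ⊕ Fin p.l,
    p.ptIdx a < p.ptIdx b → p.ptIdx b < p.ptIdx c → p.ptIdx c < p.ptIdx d →
    p.rel.r a c → p.rel.r b d → p.rel.r a b

/-- The one-block projective partition on `k + k` points, all colored `c`. -/
def piP (k : ℕ) (c : Bool) : CPartition :=
  ⟨k, k, fun _ => c, fun _ => c, ⊤⟩

/-- `π_k` for `k ∈ ℤ \ {0}` : one block, `|k| + |k|` points, white if `k > 0`,
black if `k < 0`. -/
def piZ (k : ℤ) : CPartition := piP k.natAbs (decide (0 < k))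

/-- `π_{0⁺}`, the one-block projective partition with rows colored white–black. -/
def pi0plus : CPartition :=
  ⟨2, 2, ![true, false], ![true, false], ⊤⟩

/-- `θ_k` : one block of `k` points of color `c` on one row. -/
def thetaP (k : ℕ) (c : Bool) : CPartition :=
  ⟨k, 0, fun _ => c, Fin.elim0, ⊤⟩

/-- `β_k = θ_k* θ_k` : one upper block and one lower block of `k` points each,
all of color `c`. -/
def betaP (k : ℕ) (c : Bool) : CPartition :=
  ⟨k, k, fun _ => c, fun _ => c, sumSetoid ⊤ ⊤⟩

/-- `β_k` for `k : ℤ` (white if `k > 0`, black if `k < 0`, empty if `k = 0`). -/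
def betaZ (k : ℤ) : CPartition := betaP k.natAbs (decide (0 < k))

/-- Tensor powers, `tpow p 0` being the empty partition. -/
def tpow (p : CPartition) : ℕ → CPartition
  | 0 => betaP 0 true
  | m + 1 => tensor (tpow p m) p

end CPartition

open CPartition

/-- A category of two-colored partitions: a class of partitions containing the
white identity and stable under horizontal concatenation, vertical concatenation
(when the colorings match), reflection and rotations. -/
structure PartitionCategory where
  mem : Set CPartition
  id_mem : idPart (fun _ : Fin 1 => true) ∈ mem
  tensor_mem : ∀ p q, p ∈ mem → q ∈ mem → tensor p q ∈ mem
  vcomp_mem : ∀ p q (h : p.l = q.k), p ∈ mem → q ∈ mem →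
    (∀ j, p.lc j = q.uc (Fin.cast h j)) → vcomp p q h ∈ mem
  reflect_mem : ∀ p, p ∈ mem → reflect p ∈ mem
  rotDown_mem : ∀ p, p ∈ mem → ∀ m (h : p.k = m + 1), rotDown p m h ∈ mem
  rotUp_mem : ∀ p, p ∈ mem → ∀ m (h : p.l = m + 1), rotUp p m h ∈ mem

/-!
If `T ∈ C` has no through-block and its upper row is a single block of `k` points of one color,
then `T` followed by its reflection `T*` is `β_k`, so `β_k ∈ C`. Such `T` are obtained by
composing with the one-block partitions `π`, which all lie in `C` (a bar below switches all
colors): `π_{a+b}` on top of `β_a ⊗ β_b` gives `β_{a+b}`; `π_r` next to a rotated `π̄_b`, on top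
of `β_{b+r} ⊗ β̄_b`, gives `β_r`; and capping the upper row of `β_k ⊗ π̄_k` with a rotated `π̄_k`,
then rotating the lower block of `β_k` to the upper row, turns `β_k` into `β̄_k = β_{-k}`. So
`J(C)` contains `0` and is closed under negation and addition, and every subgroup of `ℤ` is `nℤ`.
-/

namespace CPartition

/-- Colors read around the boundary: lower points count with their color switched, which is the
color they get when rotated to the upper row. -/
def colorAt (p : CPartition) : Fin p.k ⊕ Fin p.l → Bool :=
  Sum.elim p.uc fun j => !p.lc j

theorem ext_of_cast {p q : CPartition} (hk : p.k = q.k) (hl : p.l = q.l)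
    (hc : ∀ x, p.colorAt x = q.colorAt (Sum.map (Fin.cast hk) (Fin.cast hl) x))
    (hr : ∀ x y, p.rel x y ↔
      q.rel (Sum.map (Fin.cast hk) (Fin.cast hl) x) (Sum.map (Fin.cast hk) (Fin.cast hl) y)) :
    p = q := by
  obtain ⟨k, l, uc, lc, rel⟩ := p
  obtain ⟨k', l', uc', lc', rel'⟩ := q
  cases hk; cases hl
  have hrel : rel = rel' := Setoid.ext fun x y => by simpa using hr x y
  subst hrel
  congr
  · exact funext fun i => by simpa [colorAt] using hc (Sum.inl i)
  · exact funext fun j => by simpa [colorAt] using hc (Sum.inr j)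

theorem sumElim_finSumFinEquiv_symm {a b : ℕ} {β : Sort*} (f : Fin a → β) (g : Fin b → β)
    (j : Fin (a + b)) :
    Sum.elim f g (finSumFinEquiv.symm j) =
      if h : (j : ℕ) < a then f ⟨j, h⟩ else g ⟨j - a, by omega⟩ := by
  induction j using Fin.addCases with
  | left i => simp
  | right i => simp

theorem tensor_rel_iff (p q : CPartition) (x y : Fin (p.k + q.k) ⊕ Fin (p.l + q.l)) :
    (tensor p q).rel x y ↔
      Sum.LiftRel p.rel q.rel
        (Equiv.sumSumSumComm _ _ _ _ (Sum.map finSumFinEquiv.symm finSumFinEquiv.symm x))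
        (Equiv.sumSumSumComm _ _ _ _ (Sum.map finSumFinEquiv.symm finSumFinEquiv.symm y)) :=
  Iff.rfl

theorem tensor_rel_map_castAdd (p q : CPartition) (x y : Fin p.k ⊕ Fin p.l) :
    (tensor p q).rel (Sum.map (Fin.castAdd q.k) (Fin.castAdd q.l) x)
      (Sum.map (Fin.castAdd q.k) (Fin.castAdd q.l) y) ↔ p.rel x y := by
  -- `(tensor p q).k` is `p.k + q.k` only after unfolding `tensor`, hence the ascription.
  have hmap : ∀ z : Fin p.k ⊕ Fin p.l,
      Equiv.sumSumSumComm _ _ _ _ (Sum.map finSumFinEquiv.symm finSumFinEquiv.symm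
        (Sum.map (Fin.castAdd q.k) (Fin.castAdd q.l) z : Fin (p.k + q.k) ⊕ Fin (p.l + q.l))) =
        (Sum.inl z : (Fin p.k ⊕ Fin p.l) ⊕ (Fin q.k ⊕ Fin q.l)) := by
    rintro (i | i) <;> simp [Equiv.sumSumSumComm]
  have key : Sum.LiftRel p.rel q.rel (Sum.inl x) (Sum.inl y) ↔ p.rel x y := Sum.liftRel_inl_inl
  rw [← hmap x, ← hmap y] at key
  exact (tensor_rel_iff p q _ _).trans key

theorem tensor_rel_le_ker {α : Type*} {p q : CPartition} {fu : Fin p.k → α} {fl : Fin p.l → α}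
    {gu : Fin q.k → α} {gl : Fin q.l → α} (hp : p.rel ≤ Setoid.ker (Sum.elim fu fl))
    (hq : q.rel ≤ Setoid.ker (Sum.elim gu gl)) :
    (tensor p q).rel ≤ Setoid.ker (Sum.elim (fun i => Sum.elim fu gu (finSumFinEquiv.symm i))
      (fun j => Sum.elim fl gl (finSumFinEquiv.symm j))) := by
  have hlabel : ∀ z : Fin (p.k + q.k) ⊕ Fin (p.l + q.l),
      Sum.elim (Sum.elim fu fl) (Sum.elim gu gl) (Equiv.sumSumSumComm _ _ _ _
        (Sum.map finSumFinEquiv.symm finSumFinEquiv.symm z)) =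
      Sum.elim (fun i => Sum.elim fu gu (finSumFinEquiv.symm i))
        (fun j => Sum.elim fl gl (finSumFinEquiv.symm j)) z := by
    rintro (i | j)
    · induction i using Fin.addCases <;> simp [Equiv.sumSumSumComm]
    · induction j using Fin.addCases <;> simp [Equiv.sumSumSumComm]
  have hlift : ∀ a b, Sum.LiftRel p.rel q.rel a b →
      Sum.elim (Sum.elim fu fl) (Sum.elim gu gl) a =
        Sum.elim (Sum.elim fu fl) (Sum.elim gu gl) b := by
    rintro _ _ (⟨h⟩ | ⟨h⟩)
    exacts [hp h, hq h]
  intro x y hxy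
  exact (hlabel x).symm.trans ((hlift _ _ ((tensor_rel_iff p q x y).mp hxy)).trans (hlabel y))

theorem vcomp_rel_le_ker {α : Type*} {p q : CPartition} {h : p.l = q.k} {fu : Fin p.k → α}
    {fm : Fin p.l → α} {fl : Fin q.l → α} (hp : p.rel ≤ Setoid.ker (Sum.elim fu fm))
    (hq : q.rel ≤ Setoid.ker (Sum.elim (fun i => fm (Fin.cast h.symm i)) fl)) :
    (vcomp p q h).rel ≤ Setoid.ker (Sum.elim fu fl) := by
  let label : Fin p.k ⊕ (Fin p.l ⊕ Fin q.l) → α := Sum.elim fu (Sum.elim fm fl)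
  intro x y hxy
  have := Setoid.eqvGen_le (s := Setoid.ker label) ?_ hxy
  · rcases x with x | x <;> rcases y with y | y <;> exact this
  rintro _ _ (⟨a, b, hab, rfl, rfl⟩ | ⟨a, b, hab, rfl, rfl⟩)
  · have := hp hab
    rcases a with a | a <;> rcases b with b | b <;> exact this
  · have := hq hab
    rcases a with a | a <;> rcases b with b | b <;> exact this

theorem vcomp_rel_inl_inl {p q : CPartition} (h : p.l = q.k) {i i' : Fin p.k}
    (hi : p.rel (Sum.inl i) (Sum.inl i')) : (vcomp p q h).rel (Sum.inl i) (Sum.inl i') :=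
  Relation.EqvGen.rel _ _ (Or.inl ⟨Sum.inl i, Sum.inl i', hi, rfl, rfl⟩)

theorem vcomp_rel_inr_inr {p q : CPartition} (h : p.l = q.k) {j j' : Fin q.l}
    (hj : q.rel (Sum.inr j) (Sum.inr j')) : (vcomp p q h).rel (Sum.inr j) (Sum.inr j') :=
  Relation.EqvGen.rel _ _ (Or.inr ⟨Sum.inr j, Sum.inr j', hj, rfl, rfl⟩)

theorem rel_le_ker_const {α : Type*} (p : CPartition) (a : α) :
    p.rel ≤ Setoid.ker (Sum.elim (fun _ => a) fun _ => a) := by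
  rw [Sum.elim_lam_const_lam_const]
  exact fun _ _ _ => rfl

def NoThrough (p : CPartition) : Prop :=
  ∀ i j, ¬ p.rel (Sum.inl i) (Sum.inr j)

theorem NoThrough.rel_le_ker {α : Type*} {p : CPartition} (hp : p.NoThrough) (a b : α) :
    p.rel ≤ Setoid.ker (Sum.elim (fun _ => a) (fun _ => b)) := by
  rintro (i | j) (i' | j') h
  · rfl
  · exact absurd h (hp i j')
  · exact absurd (p.rel.symm h) (hp i' j)
  · rfl

theorem noThrough_of_rel_le_ker {α : Type*} {p : CPartition} {a b : α} (hab : a ≠ b)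
    (hp : p.rel ≤ Setoid.ker (Sum.elim (fun _ => a) (fun _ => b))) : p.NoThrough :=
  fun _ _ h => hab (hp h)

theorem noThrough_betaP (n : ℕ) (c : Bool) : (betaP n c).NoThrough :=
  fun _ _ h => nomatch h

theorem NoThrough.tensor {p q : CPartition} (hp : p.NoThrough) (hq : q.NoThrough) :
    (tensor p q).NoThrough := by
  have h := tensor_rel_le_ker (hp.rel_le_ker true false) (hq.rel_le_ker true false)
  simp only [Sum.elim_lam_const_lam_const] at h
  exact noThrough_of_rel_le_ker (by decide : true ≠ false) h

theorem NoThrough.vcomp (p : CPartition) {q : CPartition} (h : p.l = q.k) (hq : q.NoThrough) :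
    (vcomp p q h).NoThrough :=
  noThrough_of_rel_le_ker (by decide : true ≠ false) <|
    vcomp_rel_le_ker (rel_le_ker_const p true) (hq.rel_le_ker true false)

/-- The point map along which `rotUp` pulls back the relation (by definition) and the colors. -/
def rotUpPoint (p : CPartition) (m : ℕ) (h : p.l = m + 1) :
    Fin (p.k + 1) ⊕ Fin m → Fin p.k ⊕ Fin p.l :=
  Sum.elim (fun i => Fin.cases (Sum.inr (Fin.cast h.symm 0)) Sum.inl i)
    (fun j => Sum.inr (Fin.cast h.symm j.succ))

theorem colorAt_rotUp (p : CPartition) (m : ℕ) (h : p.l = m + 1) (x) :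
    (rotUp p m h).colorAt x = p.colorAt (rotUpPoint p m h x) := by
  rcases x with i | i
  · induction i using Fin.cases <;> rfl
  · rfl

def rotUpNPoint (p : CPartition) (j m : ℕ) (h : p.l = j + m) :
    Fin (j + p.k) ⊕ Fin m → Fin p.k ⊕ Fin p.l :=
  Sum.elim
    (fun i => if hi : (i : ℕ) < j then Sum.inr ⟨j - 1 - i, by omega⟩
      else Sum.inl ⟨i - j, by omega⟩)
    (fun i => Sum.inr ⟨j + i, by omega⟩)

theorem rotUpNPoint_inl_of_lt {p : CPartition} {j m : ℕ} (h : p.l = j + m) {i : Fin (j + p.k)}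
    (hi : (i : ℕ) < j) : rotUpNPoint p j m h (Sum.inl i) = Sum.inr ⟨j - 1 - i, by omega⟩ :=
  dif_pos hi

theorem rotUpNPoint_inl_of_le {p : CPartition} {j m : ℕ} (h : p.l = j + m) {i : Fin (j + p.k)}
    (hi : j ≤ (i : ℕ)) : rotUpNPoint p j m h (Sum.inl i) = Sum.inl ⟨i - j, by omega⟩ :=
  dif_neg (by omega)

/-- `rotUp` iterated `j` times: the `j` leftmost lower points of `p` move, in reversed order, to the
front of the upper row. -/
abbrev rotUpN (p : CPartition) (j m : ℕ) (h : p.l = j + m) : CPartition where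
  k := j + p.k
  l := m
  uc i := p.colorAt (rotUpNPoint p j m h (Sum.inl i))
  lc i := !p.colorAt (rotUpNPoint p j m h (Sum.inr i))
  rel := Setoid.comap (rotUpNPoint p j m h) p.rel

theorem colorAt_rotUpN (p : CPartition) (j m : ℕ) (h : p.l = j + m) (x) :
    (rotUpN p j m h).colorAt x = p.colorAt (rotUpNPoint p j m h x) := by
  rcases x with i | i <;> simp [colorAt]

theorem rotUpN_zero (p : CPartition) (m : ℕ) (h : p.l = 0 + m) : rotUpN p 0 m h = p := by
  have hpt : ∀ x, rotUpNPoint p 0 m h x =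
      Sum.map (Fin.cast (Nat.zero_add _)) (Fin.cast (h.trans (Nat.zero_add m)).symm) x := by
    rintro (i | i) <;>
      simp only [rotUpNPoint, not_lt_zero, ↓reduceDIte, tsub_zero, zero_add, Sum.elim_inl,
        Sum.elim_inr, Sum.map_inl, Sum.map_inr] <;> rfl
  refine ext_of_cast (Nat.zero_add _) (h.trans (Nat.zero_add m)).symm (fun x => ?_)
    (fun x y => ?_)
  · rw [colorAt_rotUpN, hpt]
  · exact iff_of_eq (congrArg₂ p.rel (hpt x) (hpt y))

theorem rotUpNPoint_rotUpPoint (p : CPartition) (j m : ℕ) (h : p.l = j + (m + 1))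
    (x : Fin (j + p.k + 1) ⊕ Fin m) :
    rotUpNPoint p j (m + 1) h (rotUpPoint (rotUpN p j (m + 1) h) m rfl x) =
      rotUpNPoint p (j + 1) m (by omega) (Sum.map (Fin.cast (by omega)) id x) := by
  rcases x with i | i
  · induction i using Fin.cases with
    | zero => simp [rotUpPoint, rotUpNPoint]
    | succ i =>
      simp only [rotUpNPoint, rotUpPoint, Fin.cases_succ, Sum.elim_inl, Sum.map_inl, Fin.val_cast,
        Fin.val_succ, Nat.add_lt_add_iff_right]
      split_ifs
      · simp only [Sum.inr.injEq, Fin.mk.injEq]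
        omega
      · simp only [Sum.inl.injEq, Fin.mk.injEq]
        omega
  · simp only [rotUpNPoint, rotUpPoint, Sum.elim_inr, Sum.map_inr, Fin.val_cast, Fin.val_succ,
      id_eq, Sum.inr.injEq, Fin.mk.injEq]
    omega

theorem rotUp_rotUpN (p : CPartition) (j m : ℕ) (h : p.l = j + (m + 1)) :
    rotUp (rotUpN p j (m + 1) h) m rfl = rotUpN p (j + 1) m (by omega) := by
  have hpt := rotUpNPoint_rotUpPoint p j m h
  refine ext_of_cast (show j + p.k + 1 = j + 1 + p.k by omega) rfl (fun x => ?_) (fun x y => ?_)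
  · exact (colorAt_rotUp _ _ _ x).trans <| (colorAt_rotUpN _ _ _ _ _).trans <|
      (congrArg p.colorAt (hpt x)).trans (colorAt_rotUpN _ _ _ _ _).symm
  · exact iff_of_eq (congrArg₂ p.rel (hpt x) (hpt y))

abbrev rotPiP (k : ℕ) (c : Bool) : CPartition :=
  ⟨0, k + k, Fin.elim0, fun i => if (i : ℕ) < k then !c else c, ⊤⟩

theorem piP_l (k : ℕ) (c : Bool) : (piP k c).l = k + 0 := rfl

theorem reflect_rotUpN_piP (k : ℕ) (c : Bool) :
    reflect (rotUpN (piP k c) k 0 (piP_l k c)) = rotPiP k c := by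
  refine ext_of_cast rfl rfl (fun x => ?_) (fun _ _ => iff_of_true trivial trivial)
  rcases x with i | (i : Fin (k + k))
  · exact i.elim0
  · change (!(piP k c).colorAt (rotUpNPoint (piP k c) k 0 (piP_l k c) (Sum.inl i))) =
      !if (i : ℕ) < k then !c else c
    by_cases hi : (i : ℕ) < k
    · rw [if_pos hi]
      exact congrArg (fun x => !(piP k c).colorAt x) (rotUpNPoint_inl_of_lt (piP_l k c) hi)
    · rw [if_neg hi]
      exact congrArg (fun x => !(piP k c).colorAt x)
        (rotUpNPoint_inl_of_le (piP_l k c) (not_lt.mp hi))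

def cappedBetaP (k : ℕ) (c : Bool) : CPartition :=
  vcomp (rotPiP k (!c)) (tensor (betaP k c) (piP k (!c))) rfl

theorem cappedBetaP_l (k : ℕ) (c : Bool) : (cappedBetaP k c).l = k + k := rfl

theorem cappedBetaP_lc (k : ℕ) (c : Bool) (j : Fin (k + k)) :
    (cappedBetaP k c).lc j = if (j : ℕ) < k then c else !c := by
  change Sum.elim (fun _ => c) (fun _ => !c) (finSumFinEquiv.symm j) = _
  rw [sumElim_finSumFinEquiv_symm]
  split_ifs <;> rfl

theorem cappedBetaP_rel_inr_inr {k : ℕ} {c : Bool} {a b : Fin (k + k)} (ha : (a : ℕ) < k)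
    (hb : (b : ℕ) < k) : (cappedBetaP k c).rel (Sum.inr a) (Sum.inr b) :=
  vcomp_rel_inr_inr rfl ((tensor_rel_map_castAdd (betaP k c) (piP k (!c))
    (Sum.inr ⟨a, ha⟩) (Sum.inr ⟨b, hb⟩)).mpr (Sum.LiftRel.inr trivial))

theorem cappedBetaP_not_rel_inr_inr {k : ℕ} {c : Bool} {a b : Fin (k + k)} (ha : (a : ℕ) < k)
    (hb : k ≤ (b : ℕ)) : ¬ (cappedBetaP k c).rel (Sum.inr a) (Sum.inr b) := by
  have hlabel := tensor_rel_le_ker ((noThrough_betaP k c).rel_le_ker true false)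
    (rel_le_ker_const (piP k (!c)) true)
  simp only [Sum.elim_lam_const_lam_const] at hlabel
  intro h
  have hab := vcomp_rel_le_ker (rel_le_ker_const (rotPiP k (!c)) true) hlabel h
  change Sum.elim (fun _ => false) (fun _ => true) (finSumFinEquiv.symm a) =
    Sum.elim (fun _ => false) (fun _ => true) (finSumFinEquiv.symm b) at hab
  rw [sumElim_finSumFinEquiv_symm, sumElim_finSumFinEquiv_symm, dif_pos ha,
    dif_neg (by omega)] at hab
  exact Bool.false_ne_true hab

end CPartition

namespace PartitionCategory

variable (C : PartitionCategory)

theorem rotUpN_mem {p : CPartition} (hp : p ∈ C.mem) :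
    ∀ j m (h : p.l = j + m), rotUpN p j m h ∈ C.mem := by
  intro j
  induction j with
  | zero => intro m h; rw [rotUpN_zero]; exact hp
  | succ j ih =>
    intro m h
    rw [← rotUp_rotUpN p j m (by omega)]
    exact C.rotUp_mem _ (ih (m + 1) _) m rfl

/-- The upper block of `T` and its mirror image in `T*` stay apart because `T` has no
through-block. -/
theorem betaP_mem_of_noThrough {T : CPartition} (hT : T ∈ C.mem) {c : Bool}
    (hu : ∀ i, T.uc i = c) (hconn : ∀ i i', T.rel (Sum.inl i) (Sum.inl i'))
    (hnt : T.NoThrough) : betaP T.k c ∈ C.mem := by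
  have hmem := C.vcomp_mem T (reflect T) rfl hT (C.reflect_mem _ hT) fun _ => rfl
  suffices vcomp T (reflect T) rfl = betaP T.k c by rwa [this] at hmem
  have hlabel : (vcomp T (reflect T) rfl).rel ≤ Setoid.ker (Sum.elim (fun _ => 0) fun _ => 2) :=
    vcomp_rel_le_ker (fm := fun _ => 1) (hnt.rel_le_ker 0 1) fun x y hxy => by
      have := hnt.rel_le_ker 2 1 hxy
      rcases x with x | x <;> rcases y with y | y <;> exact this
  refine ext_of_cast rfl rfl (fun x => ?_) (fun x y => ?_)
  · rcases x with i | i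
    exacts [hu i, congrArg (!·) (hu i)]
  · rcases x with i | i <;> rcases y with i' | i'
    · exact iff_of_true (vcomp_rel_inl_inl rfl (hconn i i')) (Sum.LiftRel.inl trivial)
    · exact iff_of_false (fun h => absurd (hlabel h) (by simp)) (by rintro ⟨⟩)
    · exact iff_of_false (fun h => absurd (hlabel h) (by simp)) (by rintro ⟨⟩)
    · exact iff_of_true (vcomp_rel_inr_inr rfl (hconn i i')) (Sum.LiftRel.inr trivial)

theorem betaP_zero_mem (c : Bool) : betaP 0 c ∈ C.mem :=
  C.betaP_mem_of_noThrough (C.rotDown_mem _ C.id_mem 0 rfl) (c := c) (fun i => i.elim0)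
    (fun i => i.elim0) (fun i => i.elim0)

theorem rotPiP_mem {k : ℕ} {c : Bool} (h : piP k c ∈ C.mem) : rotPiP k c ∈ C.mem :=
  reflect_rotUpN_piP k c ▸ C.reflect_mem _ (C.rotUpN_mem h k 0 (piP_l k c))

theorem cappedBetaP_mem {k : ℕ} {c : Bool} (hπ : piP k (!c) ∈ C.mem)
    (hβ : betaP k c ∈ C.mem) : cappedBetaP k c ∈ C.mem :=
  C.vcomp_mem _ _ rfl (C.rotPiP_mem hπ) (C.tensor_mem _ _ hβ hπ) fun (j : Fin (k + k)) => by
    change _ = Sum.elim (fun _ => c) (fun _ => !c) (finSumFinEquiv.symm j)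
    rw [sumElim_finSumFinEquiv_symm]
    by_cases hj : (j : ℕ) < k <;> simp [hj]

theorem betaP_add_mem {a b : ℕ} {c : Bool} (hπ : piP (a + b) c ∈ C.mem)
    (ha : betaP a c ∈ C.mem) (hb : betaP b c ∈ C.mem) : betaP (a + b) c ∈ C.mem := by
  have hT := C.vcomp_mem _ _ rfl hπ (C.tensor_mem _ _ ha hb) fun _ =>
    (congrFun (Sum.elim_lam_const_lam_const c) _).symm
  exact C.betaP_mem_of_noThrough hT (fun _ => rfl) (fun i i' => vcomp_rel_inl_inl rfl trivial)
    (NoThrough.vcomp _ _ ((noThrough_betaP a c).tensor (noThrough_betaP b c)))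

/-- Rotating the lower block of `β_k` in `cappedBetaP k c` to the upper row gives a partition to
which `betaP_mem_of_noThrough` applies. -/
theorem betaP_not_mem {k : ℕ} {c : Bool} (hπ : piP k (!c) ∈ C.mem) (hβ : betaP k c ∈ C.mem) :
    betaP k (!c) ∈ C.mem := by
  have hρ : ∀ i : Fin (k + 0),
      rotUpNPoint (cappedBetaP k c) k k (cappedBetaP_l k c) (Sum.inl i) =
        Sum.inr (⟨k - 1 - i, by omega⟩ : Fin (k + k)) :=
    fun i => rotUpNPoint_inl_of_lt _ i.isLt
  -- The binder types restate the sizes of the rotated partition so that `omega` can read them.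
  refine C.betaP_mem_of_noThrough
    (C.rotUpN_mem (C.cappedBetaP_mem hπ hβ) k k (cappedBetaP_l k c))
    (fun (i : Fin (k + 0)) => ?_) (fun (i i' : Fin (k + 0)) => ?_)
    (fun (i : Fin (k + 0)) (j : Fin k) h => ?_)
  · change (cappedBetaP k c).colorAt (rotUpNPoint _ k k _ (Sum.inl i)) = !c
    rw [hρ]
    exact congrArg (!·)
      ((cappedBetaP_lc k c _).trans (if_pos (show k - 1 - (i : ℕ) < k by omega)))
  · change (cappedBetaP k c).rel (rotUpNPoint _ k k _ (Sum.inl i))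
      (rotUpNPoint _ k k _ (Sum.inl i'))
    rw [hρ, hρ]
    exact cappedBetaP_rel_inr_inr (show k - 1 - (i : ℕ) < k by omega)
      (show k - 1 - (i' : ℕ) < k by omega)
  · change (cappedBetaP k c).rel (rotUpNPoint _ k k _ (Sum.inl i))
      (Sum.inr (⟨k + j, by omega⟩ : Fin (k + k))) at h
    rw [hρ] at h
    exact cappedBetaP_not_rel_inr_inr (show k - 1 - (i : ℕ) < k by omega)
      (show k ≤ k + (j : ℕ) by omega) h

/-- The upper row of `π_r ⊗ rotPiP b (!c)` is the block of `π_r`; composing with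
`β_{b+r} ⊗ β̄_b` below removes every through-block. -/
theorem betaP_sub_mem {r b : ℕ} {c : Bool} (hπr : piP r c ∈ C.mem) (hπb : piP b (!c) ∈ C.mem)
    (hA : betaP (b + r) c ∈ C.mem) (hB : betaP b (!c) ∈ C.mem) : betaP r c ∈ C.mem := by
  set U := tensor (piP r c) (rotPiP b (!c))
  set L := tensor (betaP (b + r) c) (betaP b (!c))
  have h : U.l = L.k := show r + (b + b) = b + r + b by omega
  have hT : vcomp U L h ∈ C.mem :=
    C.vcomp_mem _ _ h (C.tensor_mem _ _ hπr (C.rotPiP_mem hπb)) (C.tensor_mem _ _ hA hB)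
      fun (j : Fin (r + (b + b))) => by
        change Sum.elim (fun _ => c) (fun x : Fin (b + b) => if (x : ℕ) < b then !!c else !c)
            (finSumFinEquiv.symm j) =
          Sum.elim (fun _ => c) (fun _ => !c)
            (finSumFinEquiv.symm (Fin.cast h j : Fin (b + r + b)))
        rw [sumElim_finSumFinEquiv_symm, sumElim_finSumFinEquiv_symm]
        have hj : ((Fin.cast h j : Fin (b + r + b)) : ℕ) = j := rfl
        split_ifs <;> (try simp only [Bool.not_not] at *) <;> first | rfl | omega
  exact C.betaP_mem_of_noThrough hT (c := c)
    (fun (i : Fin (r + 0)) => by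
      change Sum.elim (fun _ => c) Fin.elim0 (finSumFinEquiv.symm i) = c
      rcases finSumFinEquiv.symm i with _ | x
      exacts [rfl, x.elim0])
    (fun (i i' : Fin r) => vcomp_rel_inl_inl h
      ((tensor_rel_map_castAdd (piP r c) (rotPiP b (!c)) (Sum.inl i) (Sum.inl i')).mpr trivial))
    (NoThrough.vcomp _ _ ((noThrough_betaP _ _).tensor (noThrough_betaP _ _)))

theorem piP_mem_of_piZ_mem (hI : ∀ k : ℤ, k ≠ 0 → piZ k ∈ C.mem) (n : ℕ) (c : Bool) :
    piP n c ∈ C.mem := by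
  rcases Nat.eq_zero_or_pos n with rfl | hn
  · have hempty : piP 0 c = betaP 0 c :=
      ext_of_cast rfl rfl (fun x => x.elim Fin.elim0 Fin.elim0)
        (fun x => x.elim Fin.elim0 Fin.elim0)
    exact hempty ▸ C.betaP_zero_mem c
  · cases c
    · have h := hI (-n) (by omega)
      rwa [piZ, Int.natAbs_neg, Int.natAbs_natCast, decide_eq_false (by omega)] at h
    · have h := hI n (by omega)
      rwa [piZ, Int.natAbs_natCast, decide_eq_true (by omega)] at h

theorem betaP_not_mem_iff (hπ : ∀ n c, piP n c ∈ C.mem) {n : ℕ} {c : Bool} :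
    betaP n (!c) ∈ C.mem ↔ betaP n c ∈ C.mem :=
  ⟨fun h => by simpa using C.betaP_not_mem (hπ n _) h, C.betaP_not_mem (hπ n _)⟩

theorem betaZ_mem_iff (hπ : ∀ n c, piP n c ∈ C.mem) (z : ℤ) :
    betaZ z ∈ C.mem ↔ betaP z.natAbs true ∈ C.mem := by
  unfold betaZ
  cases decide (0 < z)
  exacts [C.betaP_not_mem_iff hπ (c := true), Iff.rfl]

theorem betaP_mem_of_add_mem (hπ : ∀ n c, piP n c ∈ C.mem) {r b : ℕ} {c : Bool}
    (hA : betaP (b + r) c ∈ C.mem) (hB : betaP b c ∈ C.mem) : betaP r c ∈ C.mem :=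
  C.betaP_sub_mem (hπ _ _) (hπ _ _) hA ((C.betaP_not_mem_iff hπ).mpr hB)

def betaSubgroup (hπ : ∀ n c, piP n c ∈ C.mem) : AddSubgroup ℤ where
  carrier := {k | betaZ k ∈ C.mem}
  zero_mem' := (C.betaZ_mem_iff hπ 0).mpr (C.betaP_zero_mem true)
  neg_mem' {z} hz := (C.betaZ_mem_iff hπ (-z)).mpr <| by
    rw [Int.natAbs_neg]
    exact (C.betaZ_mem_iff hπ z).mp hz
  add_mem' {y z} hy hz := by
    replace hy := (C.betaZ_mem_iff hπ y).mp hy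
    replace hz := (C.betaZ_mem_iff hπ z).mp hz
    refine (C.betaZ_mem_iff hπ (y + z)).mpr ?_
    rcases (by omega : (y + z).natAbs = y.natAbs + z.natAbs ∨
        y.natAbs = z.natAbs + (y + z).natAbs ∨ z.natAbs = y.natAbs + (y + z).natAbs) with
      h | h | h
    · exact h ▸ C.betaP_add_mem (hπ _ _) hy hz
    · exact C.betaP_mem_of_add_mem hπ (h ▸ hy) hz
    · exact C.betaP_mem_of_add_mem hπ (h ▸ hz) hy

end PartitionCategory

theorem JC_is_subgroup_general (C : PartitionCategory)
    (hI : ∀ k : ℤ, k ≠ 0 → piZ k ∈ C.mem) :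
    ∃ n : ℕ, {k : ℤ | betaZ k ∈ C.mem} = {k : ℤ | (n : ℤ) ∣ k} := by
  have hπ := C.piP_mem_of_piZ_mem hI
  obtain ⟨a, ha⟩ := Int.subgroup_cyclic (C.betaSubgroup hπ)
  refine ⟨a.natAbs, Set.ext fun k => ?_⟩
  change k ∈ C.betaSubgroup hπ ↔ _
  rw [ha, ← AddSubgroup.zmultiples_eq_closure, ← Int.zmultiples_natAbs, Int.mem_zmultiples_iff]
  rfl

/-- if `C` is a category of noncrossing colored partitions with
`I(C) = ℤ \ {0}` (i.e. `π_k ∈ C` for all `k ≠ 0`), then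
`J(C) = {k ∈ ℤ : β_k ∈ C}` is an additive subgroup of `ℤ`, hence equals `nℤ`
for some `n ≥ 0`. -/
theorem JC_is_subgroup (C : PartitionCategory)
    (hnc : ∀ p ∈ C.mem, p.NonCrossing)
    (hI : ∀ k : ℤ, k ≠ 0 → piZ k ∈ C.mem) :
    ∃ n : ℕ, {k : ℤ | betaZ k ∈ C.mem} = {k : ℤ | (n : ℤ) ∣ k} :=
  JC_is_subgroup_general C hI
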